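/- High-extractability regime: suppose for all v in the support of the highest valuation, γv > β(v), and the builder's expected revenue R(ε) has derivative R′(ε) = ∫₀^{v*(ε)} (γv − β(v)) f(v) dv − (dv*/dε)·v*(ε)·ε·(1−γ)·f(v*(ε)), where f ≥ 0 is a density with f > 0 on the support, dv*/dε < 0, and v*(ε) > 0. Then R′(ε) > 0 for all ε ∈ (0,1), so R is strictly increasing on (0,1) and the revenue-maximizing defection rate over [0,1] is ε* = 1. -/
import Mathlib

open MeasureTheory

/-- High-extractability regime: if `γ v > β v` on the support `S` of the density `f`
of the highest valuation, and the builder's expected revenue `R` has the stated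
derivative (integral of the defection gain plus a positive boundary term) with
`dv*/dε < 0` and `v*(ε) ∈ S`, then `R' > 0` on `(0,1)`, so `R` is strictly
increasing on `(0,1)` and the revenue-maximizing defection rate on `[0,1]` is
`ε* = 1`. -/
theorem high_extractability_eps_one (β f vstar dv R : ℝ → ℝ) (γ : ℝ) (S : Set ℝ)
    (hγ : γ ∈ Set.Ioo (0 : ℝ) 1)
    (hS : S ⊆ Set.Ioi 0)
    (hβγ : ∀ v ∈ S, β v < γ * v)
    (hfpos : ∀ v ∈ S, 0 < f v)
    (hfnn : ∀ v, 0 ≤ f v)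
    (hfsupp : ∀ v ∉ S, f v = 0)
    (hβnn : ∀ v ∈ S, 0 ≤ β v)
    (hvpos : ∀ ε ∈ Set.Ioo (0 : ℝ) 1, 0 < vstar ε)
    (hvS : ∀ ε ∈ Set.Ioo (0 : ℝ) 1, vstar ε ∈ S)
    (hdv : ∀ ε ∈ Set.Ioo (0 : ℝ) 1, dv ε < 0)
    (hR' : ∀ ε ∈ Set.Ioo (0 : ℝ) 1,
      HasDerivAt R
        ((∫ v in Set.Ioc (0 : ℝ) (vstar ε), (γ * v - β v) * f v)
          - dv ε * vstar ε * ε * (1 - γ) * f (vstar ε)) ε)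
    (hRcont : ContinuousOn R (Set.Icc 0 1)) :
    (∀ ε ∈ Set.Ioo (0 : ℝ) 1,
      0 < (∫ v in Set.Ioc (0 : ℝ) (vstar ε), (γ * v - β v) * f v)
          - dv ε * vstar ε * ε * (1 - γ) * f (vstar ε)) ∧
    StrictMonoOn R (Set.Ioo 0 1) ∧
    (∀ ε ∈ Set.Icc (0 : ℝ) 1, R ε ≤ R 1) := by
  have hpos : ∀ ε ∈ Set.Ioo (0 : ℝ) 1,
      0 < (∫ v in Set.Ioc (0 : ℝ) (vstar ε), (γ * v - β v) * f v)
          - dv ε * vstar ε * ε * (1 - γ) * f (vstar ε) := by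
    intro ε hε
    have hint : 0 ≤ ∫ v in Set.Ioc (0 : ℝ) (vstar ε), (γ * v - β v) * f v := by
      apply setIntegral_nonneg measurableSet_Ioc
      intro v hv
      by_cases hvS' : v ∈ S
      · exact mul_nonneg (le_of_lt (sub_pos.2 (hβγ v hvS'))) (hfnn v)
      · simp [hfsupp v hvS']
    have hbd : dv ε * vstar ε * ε * (1 - γ) * f (vstar ε) < 0 := by
      have h1 : dv ε * vstar ε < 0 := mul_neg_of_neg_of_pos (hdv ε hε) (hvpos ε hε)
      have h2 : dv ε * vstar ε * ε < 0 := mul_neg_of_neg_of_pos h1 hε.1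
      have h3 : dv ε * vstar ε * ε * (1 - γ) < 0 :=
        mul_neg_of_neg_of_pos h2 (by linarith [hγ.2])
      exact mul_neg_of_neg_of_pos h3 (hfpos _ (hvS ε hε))
    linarith
  have hmono : StrictMonoOn R (Set.Icc 0 1) := by
    apply strictMonoOn_of_hasDerivWithinAt_pos (convex_Icc 0 1) hRcont
      (f' := fun ε => (∫ v in Set.Ioc (0 : ℝ) (vstar ε), (γ * v - β v) * f v)
          - dv ε * vstar ε * ε * (1 - γ) * f (vstar ε))
    · intro x hx
      rw [interior_Icc] at hx
      exact ((hR' x hx).hasDerivWithinAt)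
    · intro x hx
      rw [interior_Icc] at hx
      exact hpos x hx
  refine ⟨hpos, hmono.mono Set.Ioo_subset_Icc_self, ?_⟩
  intro ε hε
  rcases eq_or_lt_of_le hε.2 with h | h
  · rw [h]
  · exact le_of_lt (hmono hε (by norm_num) h)
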